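/- arXiv:2502.10165 — 2 statements merged into one kernel-verified Lean document; each statement's English description precedes it below -/
import Mathlib

section
/- Let x* be a non-zero lattice homomorphism (real-valued) on a Banach lattice X and x₀ a positive atom with coordinate functional. If x*(x₀) > 0, then the disjoint complement of x₀ (the band x₀^d) is contained in the kernel of x*, and consequently x* is a positive multiple of the coordinate functional of x₀. -/
/-- A real-valued lattice homomorphism on a Banach lattice. -/
def IsLatticeHomFunctional {X : Type*} [NormedAddCommGroup X] [Lattice X] [HasSolidNorm X] [IsOrderedAddMonoid X] [NormedSpace ℝ X]
    (f : X →L[ℝ] ℝ) : Prop :=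
  ∀ x y : X, f (x ⊔ y) = max (f x) (f y)

/-- An atom of a Banach lattice: a positive element generating a one-dimensional ideal. -/
def IsLatAtom {X : Type*} [NormedAddCommGroup X] [Lattice X] [HasSolidNorm X] [IsOrderedAddMonoid X] [NormedSpace ℝ X] (x₀ : X) : Prop :=
  0 < x₀ ∧ ∀ y : X, 0 ≤ y → y ≤ x₀ → ∃ r : ℝ, y = r • x₀

/-- `l` is the coordinate functional of the atom `x₀`: the band projection onto the span of
`x₀` is `x ↦ l x • x₀`, i.e. `x - l x • x₀` is disjoint from `x₀` for every `x`. -/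
def IsCoordinateFunctional {X : Type*} [NormedAddCommGroup X] [Lattice X] [HasSolidNorm X] [IsOrderedAddMonoid X] [NormedSpace ℝ X]
    (l : X →L[ℝ] ℝ) (x₀ : X) : Prop :=
  ∀ x : X, |x - l x • x₀| ⊓ x₀ = 0

/-- An equivalent lattice norm on `X`. -/
structure LatticeNorm (X : Type*) [NormedAddCommGroup X] [Lattice X] [NormedSpace ℝ X] where
  n : X → ℝ
  add_le : ∀ x y : X, n (x + y) ≤ n x + n y
  smul_eq : ∀ (r : ℝ) (x : X), n (r • x) = |r| * n x
  eq_zero_of : ∀ x : X, n x = 0 → x = 0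
  mono : ∀ x y : X, |x| ≤ |y| → n x ≤ n y
  lower : ∃ c : ℝ, 0 < c ∧ ∀ x : X, c * ‖x‖ ≤ n x
  upper : ∃ C : ℝ, 0 < C ∧ ∀ x : X, n x ≤ C * ‖x‖

/-! A lattice homomorphism `f` satisfies `f |x| = |f x|` and preserves `⊓`, so if `|x| ⊓ x₀ = 0`
then `min |f x| (f x₀) = 0`, which forces `f x = 0` once `f x₀ > 0`.
Applying this to `x - l x • x₀`, which is disjoint from `x₀`, gives `f x = l x * f x₀`. -/

section LatticeHom

variable {X β F : Type*} [Lattice X] [AddCommGroup X] [AddCommGroup β] [LinearOrder β]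
  [FunLike F X β] [AddMonoidHomClass F X β] {f : F}

theorem map_inf_of_map_sup [IsOrderedAddMonoid X] [IsOrderedAddMonoid β]
    (hf : ∀ x y, f (x ⊔ y) = max (f x) (f y)) (x y : X) :
    f (x ⊓ y) = min (f x) (f y) := by
  rw [← neg_neg (x ⊓ y), neg_inf, map_neg, hf, map_neg, map_neg, max_neg_neg, neg_neg]

theorem map_abs_of_map_sup (hf : ∀ x y, f (x ⊔ y) = max (f x) (f y)) (x : X) :
    f |x| = |f x| := by
  rw [abs, hf, map_neg, abs]

theorem map_eq_zero_of_abs_inf_eq_zero [IsOrderedAddMonoid X] [IsOrderedAddMonoid β]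
    (hf : ∀ x y, f (x ⊔ y) = max (f x) (f y))
    {x x₀ : X} (hpos : 0 < f x₀) (hx : |x| ⊓ x₀ = 0) : f x = 0 := by
  have hmin : min |f x| (f x₀) = 0 := by
    rw [← map_abs_of_map_sup hf, ← map_inf_of_map_sup hf, hx, map_zero]
  rcases min_choice |f x| (f x₀) with h | h
  · exact abs_eq_zero.mp (h ▸ hmin)
  · exact absurd (h ▸ hmin) hpos.ne'

end LatticeHom

theorem eq_smul_of_map_disjoint_eq_zero {X : Type*} [NormedAddCommGroup X] [Lattice X]
    [HasSolidNorm X] [IsOrderedAddMonoid X] [NormedSpace ℝ X] {f l : X →L[ℝ] ℝ} {x₀ : X}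
    (hl : IsCoordinateFunctional l x₀) (hker : ∀ x : X, |x| ⊓ x₀ = 0 → f x = 0) :
    f = f x₀ • l := by
  ext x
  have hx := hker _ (hl x)
  rw [map_sub, map_smul, smul_eq_mul, sub_eq_zero] at hx
  rw [hx, smul_apply, smul_eq_mul, mul_comm]

theorem latticeHom_pos_at_atom_eq_multiple_of_coordinate_functional_general
    {X : Type*} [NormedAddCommGroup X] [Lattice X] [HasSolidNorm X] [IsOrderedAddMonoid X] [NormedSpace ℝ X]
    (f : X →L[ℝ] ℝ) (hf : IsLatticeHomFunctional f)
    (x₀ : X) (l : X →L[ℝ] ℝ) (hl : IsCoordinateFunctional l x₀)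
    (hpos : 0 < f x₀) :
    (∀ x : X, |x| ⊓ x₀ = 0 → f x = 0) ∧ ∃ c : ℝ, 0 < c ∧ f = c • l := by
  have hker : ∀ x : X, |x| ⊓ x₀ = 0 → f x = 0 := fun _ ↦
    map_eq_zero_of_abs_inf_eq_zero hf hpos
  exact ⟨hker, f x₀, hpos, eq_smul_of_map_disjoint_eq_zero hl hker⟩

/-- if a non-zero lattice homomorphism is strictly positive at an atom `x₀`
(having a coordinate functional `l`), then the disjoint complement of `x₀` is contained in
its kernel and it is a positive multiple of `l`. -/
theorem latticeHom_pos_at_atom_eq_multiple_of_coordinate_functional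
    {X : Type*} [NormedAddCommGroup X] [Lattice X] [HasSolidNorm X] [IsOrderedAddMonoid X] [NormedSpace ℝ X] [CompleteSpace X]
    (f : X →L[ℝ] ℝ) (hf : IsLatticeHomFunctional f) (hf0 : f ≠ 0)
    (x₀ : X) (hx₀ : IsLatAtom x₀) (l : X →L[ℝ] ℝ) (hl : IsCoordinateFunctional l x₀)
    (hpos : 0 < f x₀) :
    (∀ x : X, |x| ⊓ x₀ = 0 → f x = 0) ∧ ∃ c : ℝ, 0 < c ∧ f = c • l :=
  latticeHom_pos_at_atom_eq_multiple_of_coordinate_functional_general f hf x₀ l hl hpos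
end

section
/- Every nonzero lattice homomorphism on an order continuous Banach lattice is a positive multiple of the coordinate functional of an atom; in particular it attains its norm. -/
/-- A Banach lattice has order continuous norm if every downward directed set with infimum
`0` contains elements of arbitrarily small norm (equivalently, the corresponding decreasing
net converges to `0` in norm). -/
def HasOrderContinuousNorm (X : Type*) [NormedAddCommGroup X] [Lattice X] [HasSolidNorm X] [IsOrderedAddMonoid X] [NormedSpace ℝ X] : Prop :=
  ∀ S : Set X, S.Nonempty → DirectedOn (· ≥ ·) S → IsGLB S 0 →
    ∀ ε : ℝ, 0 < ε → ∃ x ∈ S, ‖x‖ < ε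

/-! The set `A = {v ≥ 0 | f v = 1}` is closed and downward directed. Order continuity, applied to
the directed set `A - lowerBounds A` (whose infimum is `0` by the Archimedean property), makes `A`
have a least element `z`. Minimality of `z` gives `f y • z ≤ y` for `y ≥ 0` and kills every
`0 ≤ e ≤ z` with `f e = 0`; hence `z` is an atom, `f` is its coordinate functional, and
`‖f‖ = ‖z‖⁻¹ = f (‖z‖⁻¹ • z)`. -/

open Filter Topology Pointwise

section LatticeOrderedGroup
variable {X : Type*} [AddCommGroup X] [Lattice X] [IsOrderedAddMonoid X]

lemma DirectedOn.sub_lowerBounds {A : Set X} (hA : DirectedOn (· ≥ ·) A) :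
    DirectedOn (· ≥ ·) (A - lowerBounds A) := by
  rintro _ ⟨a₁, ha₁, y₁, hy₁, rfl⟩ _ ⟨a₂, ha₂, y₂, hy₂, rfl⟩
  obtain ⟨a, ha, ha₁a, ha₂a⟩ := hA a₁ ha₁ a₂ ha₂
  refine ⟨a - (y₁ ⊔ y₂), ⟨a, ha, y₁ ⊔ y₂, fun b hb => sup_le (hy₁ hb) (hy₂ hb), rfl⟩,
    sub_le_sub ha₁a le_sup_left, sub_le_sub ha₂a le_sup_right⟩

variable [Module ℝ X]

lemma inv_two_pow_smul_nonneg (n : ℕ) {x : X} (hx : 0 ≤ x) : 0 ≤ ((2 : ℝ) ^ n)⁻¹ • x := by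
  induction n with
  | zero => simpa using hx
  | succ n ih =>
    refine nsmul_two_semiclosed ?_
    have hhalf : 2 • (((2 : ℝ) ^ (n + 1))⁻¹ • x) = ((2 : ℝ) ^ n)⁻¹ • x := by
      rw [← Nat.cast_smul_eq_nsmul ℝ, smul_smul]
      congr 1
      field_simp
      ring
    rwa [hhalf]

end LatticeOrderedGroup

section SolidNorm
variable {X : Type*} [NormedAddCommGroup X] [Lattice X] [HasSolidNorm X] [IsOrderedAddMonoid X]
  [NormedSpace ℝ X]

-- Nonnegative dyadic multiples of a positive vector are positive, and the positive cone is closed.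
instance HasSolidNorm.posSMulMono : PosSMulMono ℝ X := by
  refine PosSMulMono.of_smul_nonneg fun r hr x hx => ?_
  have hdyadic : ∀ n : ℕ, 0 ≤ ((⌊r * 2 ^ n⌋₊ : ℝ) / 2 ^ n) • x := fun n => by
    rw [div_eq_mul_inv, ← smul_smul, Nat.cast_smul_eq_nsmul]
    exact nsmul_nonneg (inv_two_pow_smul_nonneg n hx) _
  have hlim : Tendsto (fun n : ℕ => ((⌊r * 2 ^ n⌋₊ : ℝ) / 2 ^ n) • x) atTop (𝓝 (r • x)) :=
    ((tendsto_nat_floor_mul_div_atTop hr).comp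
      (tendsto_pow_atTop_atTop_of_one_lt one_lt_two)).smul_const x
  exact isClosed_nonneg.mem_of_tendsto hlim (Eventually.of_forall hdyadic)

lemma nonpos_of_forall_nsmul_le {z w : X} (h : ∀ n : ℕ, n • z ≤ w) : z ≤ 0 := by
  have hz : ∀ n : ℕ, z ≤ ((n : ℝ) + 1)⁻¹ • w := fun n => by
    have hn : (0 : ℝ) < (n : ℝ) + 1 := by positivity
    calc z = ((n : ℝ) + 1)⁻¹ • (((n : ℝ) + 1) • z) := by rw [inv_smul_smul₀ hn.ne']
      _ ≤ ((n : ℝ) + 1)⁻¹ • w := by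
        refine smul_le_smul_of_nonneg_left ?_ (inv_nonneg.2 hn.le)
        exact_mod_cast (Nat.cast_smul_eq_nsmul ℝ (n + 1) z).symm ▸ h (n + 1)
  have hlim : Tendsto (fun n : ℕ => ((n : ℝ) + 1)⁻¹ • w) atTop (𝓝 0) := by
    simpa using ((tendsto_one_div_add_atTop_nhds_zero_nat (𝕜 := ℝ)).smul_const w)
  exact ge_of_tendsto' hlim hz

end SolidNorm

section LowerBounds
variable {X : Type*} [NormedAddCommGroup X] [Lattice X] [HasSolidNorm X] [IsOrderedAddMonoid X]

lemma norm_sub_le_of_le_of_le {a a' y y' : X} (hya : y ≤ a) (hya' : y ≤ a') (hy'a : y' ≤ a)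
    (hy'a' : y' ≤ a') : ‖a - a'‖ ≤ ‖a - y‖ + ‖a' - y'‖ := by
  have habs : |a - a'| ≤ (a - y) + (a' - y') := abs_le'.2
    ⟨(sub_le_sub_left hya' a).trans (le_add_of_nonneg_right (sub_nonneg.2 hy'a')),
      (neg_sub a a').symm ▸ (sub_le_sub_left hy'a a').trans
        (le_add_of_nonneg_left (sub_nonneg.2 hya))⟩
  calc ‖a - a'‖ ≤ ‖(a - y) + (a' - y')‖ := by
        refine HasSolidNorm.solid ?_
        rwa [abs_of_nonneg (add_nonneg (sub_nonneg.2 hya) (sub_nonneg.2 hy'a'))]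
    _ ≤ ‖a - y‖ + ‖a' - y'‖ := norm_add_le _ _

variable [NormedSpace ℝ X]

-- A lower bound `z` of `A - lowerBounds A` can be added to a lower bound of `A` again and again,
-- so `n • z` stays below a fixed element of `A - lowerBounds A`.
lemma isGLB_sub_lowerBounds {A : Set X} (hne : A.Nonempty) (hbdd : BddBelow A) :
    IsGLB (A - lowerBounds A) 0 := by
  refine ⟨?_, fun z hz => ?_⟩
  · rintro _ ⟨a, ha, y, hy, rfl⟩
    exact sub_nonneg.2 (hy ha)
  obtain ⟨a, ha⟩ := hne
  obtain ⟨y, hy⟩ := hbdd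
  have hstep : ∀ n : ℕ, y + n • z ∈ lowerBounds A := fun n => by
    induction n with
    | zero => simpa using hy
    | succ n ih =>
      intro b hb
      rw [succ_nsmul, ← add_assoc, ← le_sub_iff_add_le']
      exact hz ⟨b, hb, _, ih, rfl⟩
  exact nonpos_of_forall_nsmul_le fun n => le_sub_iff_add_le'.2 (hstep n ha)

end LowerBounds

section OrderContinuous
variable {X : Type*} [NormedAddCommGroup X] [Lattice X] [HasSolidNorm X] [IsOrderedAddMonoid X]
  [NormedSpace ℝ X] [CompleteSpace X]

-- Order continuity provides `a n ∈ A` and `y n ∈ lowerBounds A` with `a n - y n → 0`; then `a` is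
-- Cauchy by `norm_sub_le_of_le_of_le`, and `a` and `y` share a limit.
theorem HasOrderContinuousNorm.exists_isGLB_mem_closure (hX : HasOrderContinuousNorm X)
    {A : Set X} (hne : A.Nonempty) (hdir : DirectedOn (· ≥ ·) A) (hbdd : BddBelow A) :
    ∃ z ∈ closure A, IsGLB A z := by
  have hsmall := hX _ (hne.sub hbdd) hdir.sub_lowerBounds (isGLB_sub_lowerBounds hne hbdd)
  have hseq : ∀ n : ℕ, ∃ a ∈ A, ∃ y ∈ lowerBounds A, ‖a - y‖ < 1 / ((n : ℝ) + 1) := fun n => by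
    obtain ⟨_, ⟨a, ha, y, hy, rfl⟩, hs⟩ := hsmall _ Nat.one_div_pos_of_nat
    exact ⟨a, ha, y, hy, hs⟩
  choose a ha y hy hay using hseq
  have hδ : Tendsto (fun n : ℕ => 1 / ((n : ℝ) + 1)) atTop (𝓝 0) :=
    tendsto_one_div_add_atTop_nhds_zero_nat
  have hgap : Tendsto (fun n => a n - y n) atTop (𝓝 0) :=
    squeeze_zero_norm (fun n => (hay n).le) hδ
  have hcauchy : CauchySeq a := by
    refine cauchySeq_of_le_tendsto_0 (fun N => 1 / ((N : ℝ) + 1) + 1 / ((N : ℝ) + 1))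
      (fun n m N hn hm => ?_) (by simpa using hδ.add hδ)
    rw [dist_eq_norm]
    calc ‖a n - a m‖ ≤ ‖a n - y n‖ + ‖a m - y m‖ :=
          norm_sub_le_of_le_of_le (hy n (ha n)) (hy n (ha m)) (hy m (ha n)) (hy m (ha m))
      _ ≤ 1 / ((N : ℝ) + 1) + 1 / ((N : ℝ) + 1) :=
          add_le_add ((hay n).le.trans (Nat.one_div_le_one_div hn))
            ((hay m).le.trans (Nat.one_div_le_one_div hm))
  obtain ⟨z, hz⟩ := cauchySeq_tendsto_of_complete hcauchy
  have hyz : Tendsto y atTop (𝓝 z) := by simpa using hz.sub hgap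
  exact ⟨z, mem_closure_of_tendsto hz (Eventually.of_forall ha),
    fun b hb => le_of_tendsto' hyz fun n => hy n hb,
    fun w hw => ge_of_tendsto' hz fun n => hw (ha n)⟩

theorem HasOrderContinuousNorm.exists_isLeast (hX : HasOrderContinuousNorm X) {A : Set X}
    (hA : IsClosed A) (hne : A.Nonempty) (hdir : DirectedOn (· ≥ ·) A) (hbdd : BddBelow A) :
    ∃ z, IsLeast A z := by
  obtain ⟨z, hzA, hz⟩ := hX.exists_isGLB_mem_closure hne hdir hbdd
  exact ⟨z, hA.closure_eq ▸ hzA, hz.1⟩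

end OrderContinuous

namespace IsLatticeHomFunctional
variable {X : Type*} [NormedAddCommGroup X] [Lattice X] [HasSolidNorm X] [IsOrderedAddMonoid X]
  [NormedSpace ℝ X] {f : X →L[ℝ] ℝ}

lemma monotone (hf : IsLatticeHomFunctional f) : Monotone f := fun a b hab => by
  have hsup := hf a b
  rw [sup_eq_right.2 hab] at hsup
  exact hsup ▸ le_max_left _ _

lemma map_nonneg (hf : IsLatticeHomFunctional f) {x : X} (hx : 0 ≤ x) : 0 ≤ f x :=
  map_zero f ▸ hf.monotone hx

lemma map_abs (hf : IsLatticeHomFunctional f) (x : X) : f |x| = |f x| := by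
  rw [abs, hf, map_neg, abs_eq_max_neg]

lemma map_inf (hf : IsLatticeHomFunctional f) (a b : X) : f (a ⊓ b) = min (f a) (f b) := by
  have h : f (a ⊓ b) + f (a ⊔ b) = f a + f b := by rw [← map_add, inf_add_sup, map_add]
  rw [hf] at h
  linarith [min_add_max (f a) (f b)]

lemma exists_nonneg_map_eq_one (hf : IsLatticeHomFunctional f) (hf0 : f ≠ 0) :
    ∃ u, 0 ≤ u ∧ f u = 1 := by
  obtain ⟨x, hx⟩ : ∃ x, f x ≠ 0 := by
    by_contra! h
    exact hf0 (ContinuousLinearMap.ext h)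
  have hpos : 0 < f |x| := hf.map_abs x ▸ abs_pos.2 hx
  exact ⟨(f |x|)⁻¹ • |x|, smul_nonneg (inv_nonneg.2 hpos.le) (abs_nonneg x),
    by rw [map_smul, smul_eq_mul, inv_mul_cancel₀ hpos.ne']⟩

end IsLatticeHomFunctional

section LeastNormalized
variable {X : Type*} [NormedAddCommGroup X] [Lattice X] [IsOrderedAddMonoid X] [NormedSpace ℝ X]
  {f : X →L[ℝ] ℝ} {z : X}

lemma eq_zero_of_isLeast_of_map_eq_zero (hz : IsLeast {v | 0 ≤ v ∧ f v = 1} z) {e : X}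
    (he : 0 ≤ e) (hez : e ≤ z) (hfe : f e = 0) : e = 0 := by
  have hle : z ≤ z - e := hz.2 ⟨sub_nonneg.2 hez, by rw [map_sub, hz.1.2, hfe, sub_zero]⟩
  exact le_antisymm ((le_sub_self_iff z).1 hle) he

variable [HasSolidNorm X]

lemma smul_le_of_isLeast (hpos : ∀ y, 0 ≤ y → 0 ≤ f y) (hz : IsLeast {v | 0 ≤ v ∧ f v = 1} z)
    {y : X} (hy : 0 ≤ y) : f y • z ≤ y := by
  rcases (hpos y hy).eq_or_lt with h | h
  · rwa [← h, zero_smul]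
  have hnormalized : (f y)⁻¹ • y ∈ {v | 0 ≤ v ∧ f v = 1} :=
    ⟨smul_nonneg (inv_nonneg.2 h.le) hy, by rw [map_smul, smul_eq_mul, inv_mul_cancel₀ h.ne']⟩
  calc f y • z ≤ f y • ((f y)⁻¹ • y) := smul_le_smul_of_nonneg_left (hz.2 hnormalized) h.le
    _ = y := smul_inv_smul₀ h.ne' y

lemma isLatAtom_of_isLeast (hpos : ∀ y, 0 ≤ y → 0 ≤ f y)
    (hz : IsLeast {v | 0 ≤ v ∧ f v = 1} z) : IsLatAtom z := by
  refine ⟨hz.1.1.lt_of_ne (ne_zero_of_map (f := f) (hz.1.2 ▸ one_ne_zero)).symm,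
    fun y hy hyz => ⟨f y, ?_⟩⟩
  refine sub_eq_zero.1 (eq_zero_of_isLeast_of_map_eq_zero hz
    (sub_nonneg.2 (smul_le_of_isLeast hpos hz hy)) ?_ ?_)
  · exact (sub_le_sub_right hyz _).trans (sub_le_self z (smul_nonneg (hpos y hy) hz.1.1))
  · rw [map_sub, map_smul, hz.1.2, smul_eq_mul, mul_one, sub_self]

lemma IsLatticeHomFunctional.isCoordinateFunctional_of_isLeast (hf : IsLatticeHomFunctional f)
    (hz : IsLeast {v | 0 ≤ v ∧ f v = 1} z) : IsCoordinateFunctional f z := fun x =>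
  eq_zero_of_isLeast_of_map_eq_zero hz (le_inf (abs_nonneg _) hz.1.1) inf_le_right <| by
    rw [hf.map_inf, hf.map_abs, map_sub, map_smul, hz.1.2, smul_eq_mul, mul_one, sub_self,
      abs_zero, min_eq_left zero_le_one]

lemma IsLatticeHomFunctional.opNorm_eq_inv_norm_of_isLeast (hf : IsLatticeHomFunctional f)
    (hz : IsLeast {v | 0 ≤ v ∧ f v = 1} z) : ‖f‖ = ‖z‖⁻¹ := by
  have hnorm : 0 < ‖z‖ := norm_pos_iff.2 (ne_zero_of_map (f := f) (hz.1.2 ▸ one_ne_zero))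
  refine le_antisymm (f.opNorm_le_bound (inv_nonneg.2 hnorm.le) fun x => ?_) ?_
  · have hfx := hf.map_nonneg (abs_nonneg x)
    have hle : ‖f |x| • z‖ ≤ ‖|x|‖ := HasSolidNorm.solid <| by
      rw [abs_of_nonneg (smul_nonneg hfx hz.1.1), abs_abs]
      exact smul_le_of_isLeast (fun _ => hf.map_nonneg) hz (abs_nonneg x)
    rw [norm_smul, norm_abs_eq_norm, Real.norm_of_nonneg hfx, hf.map_abs] at hle
    rw [Real.norm_eq_abs, inv_mul_eq_div, le_div_iff₀ hnorm]
    exact hle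
  · have hfz := f.le_opNorm z
    rw [hz.1.2, norm_one] at hfz
    rwa [inv_le_iff_one_le_mul₀ hnorm]

end LeastNormalized

/-- every nonzero lattice homomorphism on an order continuous Banach lattice is
a positive multiple of the coordinate functional of an atom; in particular it attains its
norm. -/
theorem latticeHom_on_orderContinuous_is_coordinate_functional_and_attains_norm
    {X : Type*} [NormedAddCommGroup X] [Lattice X] [HasSolidNorm X] [IsOrderedAddMonoid X] [NormedSpace ℝ X] [CompleteSpace X]
    (hX : HasOrderContinuousNorm X)
    (f : X →L[ℝ] ℝ) (hf : IsLatticeHomFunctional f) (hf0 : f ≠ 0) :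
    (∃ (x₀ : X) (l : X →L[ℝ] ℝ) (c : ℝ),
      IsLatAtom x₀ ∧ IsCoordinateFunctional l x₀ ∧ 0 < c ∧ f = c • l) ∧
    ∃ x : X, ‖x‖ ≤ 1 ∧ f x = ‖f‖ := by
  obtain ⟨u, hu, hfu⟩ := hf.exists_nonneg_map_eq_one hf0
  have hclosed : IsClosed {v : X | 0 ≤ v ∧ f v = 1} :=
    isClosed_nonneg.inter (isClosed_singleton.preimage f.continuous)
  have hdir : DirectedOn (· ≥ ·) {v : X | 0 ≤ v ∧ f v = 1} := fun a ha b hb =>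
    ⟨a ⊓ b, ⟨le_inf ha.1 hb.1, by rw [hf.map_inf, ha.2, hb.2, min_self]⟩, inf_le_left,
      inf_le_right⟩
  obtain ⟨z, hz⟩ := hX.exists_isLeast hclosed ⟨u, hu, hfu⟩ hdir ⟨0, fun v hv => hv.1⟩
  have hz0 : z ≠ 0 := ne_zero_of_map (f := f) (hz.1.2 ▸ one_ne_zero)
  refine ⟨⟨z, f, 1, isLatAtom_of_isLeast (fun _ => hf.map_nonneg) hz,
    hf.isCoordinateFunctional_of_isLeast hz, one_pos, (one_smul ℝ f).symm⟩,
    ‖z‖⁻¹ • z, (norm_smul_inv_norm hz0).le, ?_⟩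
  rw [map_smul, hz.1.2, smul_eq_mul, mul_one, hf.opNorm_eq_inv_norm_of_isLeast hz]
end
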